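/- For m ≥ 4 and n ≥ 1, no triangulation T of the grid-covered cylinder graph G_{m,n} contains the complete graph K_4 as an induced subgraph. -/

import Mathlib

/-- The grid-covered cylinder graph `G_{m,n}` on vertices `(i, j)` with level
`i ∈ {0,...,n}` and column `j ∈ {0,...,m-1}`: horizontal edges join `(i, j)` and
`(i, (j+1) mod m)`, vertical edges join `(i, j)` and `(i+1, j)`. -/
def gccg (m n : ℕ) : SimpleGraph (Fin (n + 1) × Fin m) where
  Adj u v := u ≠ v ∧
    ((u.1 = v.1 ∧ ((u.2.val + 1) % m = v.2.val ∨ (v.2.val + 1) % m = u.2.val)) ∨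
     (u.2 = v.2 ∧ (u.1.val + 1 = v.1.val ∨ v.1.val + 1 = u.1.val)))
  symm := by
    constructor
    rintro u v ⟨hne, h | h⟩
    · exact ⟨hne.symm, Or.inl ⟨h.1.symm, h.2.symm⟩⟩
    · exact ⟨hne.symm, Or.inr ⟨h.1.symm, h.2.symm⟩⟩
  loopless := ⟨fun u h => h.1 rfl⟩

/-- The two endpoints (as `(level, column)` pairs) of the chosen diagonal of the cell with
lower-left corner `(i, j)`: `true` selects the diagonal `(i,j)—(i+1,(j+1) mod m)`, and
`false` selects the diagonal `(i+1,j)—(i,(j+1) mod m)`. -/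
def cellDiag (m : ℕ) (b : Bool) (i j : ℕ) : (ℕ × ℕ) × (ℕ × ℕ) :=
  if b then ((i, j), (i + 1, (j + 1) % m)) else ((i + 1, j), (i, (j + 1) % m))

/-- `u` and `v` (as `(level, column)` pairs) are the endpoints of the diagonal added to
some cell, where `d i j = some b` means the cell `(i, j)` gets the diagonal selected by
`b`, and `d i j = none` means the cell `(i, j)` gets no diagonal. -/
def DiagAdj (m n : ℕ) (d : ℕ → ℕ → Option Bool) (u v : ℕ × ℕ) : Prop :=
  ∃ i < n, ∃ j < m, ∃ b : Bool, d i j = some b ∧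
    ((u, v) = cellDiag m b i j ∨ (v, u) = cellDiag m b i j)

/-- The graph obtained from the grid-covered cylinder graph `G_{m,n}` by adding, in each
cell `(i,j)` with `d i j = some b`, the diagonal selected by `b` (cells with
`d i j = none` are left untriangulated). -/
def ptri (m n : ℕ) (d : ℕ → ℕ → Option Bool) : SimpleGraph (Fin (n + 1) × Fin m) where
  Adj u v := (gccg m n).Adj u v ∨ DiagAdj m n d (u.1.val, u.2.val) (v.1.val, v.2.val)
  symm := by
    constructor
    rintro u v (h | ⟨i, hi, j, hj, b, hb, h⟩)
    · exact Or.inl h.symm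
    · exact Or.inr ⟨i, hi, j, hj, b, hb, h.symm⟩
  loopless := by
    constructor
    rintro u (h | ⟨i, hi, j, hj, b, hb, h⟩)
    · exact h.ne rfl
    · rcases h with h | h <;> cases b <;> simp [cellDiag] at h <;> omega

/-- A (full) triangulation of the grid-covered cylinder graph `G_{m,n}`: every cell gets
exactly one diagonal, chosen by `d`. -/
def tri (m n : ℕ) (d : ℕ → ℕ → Bool) : SimpleGraph (Fin (n + 1) × Fin m) :=
  ptri m n (fun i j => some (d i j))

/-!
Every edge of a triangulation joins vertices whose levels differ by at most one and whose columns
are equal or cyclically consecutive. The column cycle has length `m ≥ 4`, hence no triangles, so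
no three vertices of a clique share a level, and a `K₄` must have two vertices on each of two
consecutive levels. The lower pair spans a horizontal edge and each upper vertex, adjacent to
both, lies directly above one of its ends: the four vertices are the corners of a single cell,
and both diagonals of that cell would be edges, while `d` chooses only one.
-/

lemma add_one_mod_eq_iff {m x y : ℕ} (hx : x < m) :
    (x + 1) % m = y ↔ x + 1 = y ∧ y < m ∨ x + 1 = m ∧ y = 0 := by
  rcases Nat.lt_or_ge (x + 1) m with h | h
  · rw [Nat.mod_eq_of_lt h]; omega
  · rw [show x + 1 = m by omega, Nat.mod_self]; omega

def CyclicAdj (m x y : ℕ) : Prop := (x + 1) % m = y ∨ (y + 1) % m = x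

/-- On a cycle of length at least `4` there are no triangles. -/
lemma CyclicAdj.eq_or_eq_of_near {m x y z : ℕ} (hm : 4 ≤ m) (hx : x < m) (hy : y < m)
    (hz : z < m) (hxy : CyclicAdj m x y) (hzx : z = x ∨ CyclicAdj m z x)
    (hzy : z = y ∨ CyclicAdj m z y) : z = x ∨ z = y := by
  simp only [CyclicAdj, add_one_mod_eq_iff hx, add_one_mod_eq_iff hy, add_one_mod_eq_iff hz] at *
  omega

section Triangulation

variable {m n : ℕ} {d : ℕ → ℕ → Bool} {u v : Fin (n + 1) × Fin m}

/-- `u`—`v` is one of the diagonals chosen by `d`, with `u` its lower end. -/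
def TriDiag (m : ℕ) (d : ℕ → ℕ → Bool) (u v : Fin (n + 1) × Fin m) : Prop :=
  v.1.val = u.1.val + 1 ∧
    (d u.1 u.2 = true ∧ (u.2.val + 1) % m = v.2 ∨ d u.1 v.2 = false ∧ (v.2.val + 1) % m = u.2)

lemma tri_adj_cases (h : (tri m n d).Adj u v) :
    (u.1 = v.1 ∧ CyclicAdj m u.2 v.2) ∨
    (u.2 = v.2 ∧ (u.1.val + 1 = v.1.val ∨ v.1.val + 1 = u.1.val)) ∨
    TriDiag m d u v ∨ TriDiag m d v u := by
  rcases h with ⟨-, h | h⟩ | ⟨i, -, j, -, b, hb, h⟩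
  · exact Or.inl h
  · exact Or.inr (Or.inl h)
  · cases Option.some_injective _ hb
    right; right
    cases hd : d i j <;> simp only [cellDiag, hd, Bool.false_eq_true, if_true, if_false,
      Prod.mk.injEq] at h <;> rcases h with ⟨⟨h1, h2⟩, h3, h4⟩ | ⟨⟨h1, h2⟩, h3, h4⟩
    · exact Or.inr ⟨by omega, Or.inr ⟨by rw [h3, h2, hd], by rw [h2, h4]⟩⟩
    · exact Or.inl ⟨by omega, Or.inr ⟨by rw [h3, h2, hd], by rw [h4, h2]⟩⟩
    · exact Or.inl ⟨by omega, Or.inl ⟨by rw [h1, h2, hd], by rw [h2, h4]⟩⟩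
    · exact Or.inr ⟨by omega, Or.inl ⟨by rw [h1, h2, hd], by rw [h4, h2]⟩⟩

lemma tri_adj_level_le (h : (tri m n d).Adj u v) : u.1.val ≤ v.1.val + 1 := by
  rcases tri_adj_cases h with ⟨hl, -⟩ | ⟨-, hl⟩ | ⟨hl, -⟩ | ⟨hl, -⟩
  · rw [hl]; omega
  all_goals omega

lemma tri_adj_col_eq_or_cyclicAdj (h : (tri m n d).Adj u v) :
    u.2.val = v.2.val ∨ CyclicAdj m u.2 v.2 := by
  rcases tri_adj_cases h with ⟨-, hc⟩ | ⟨hc, -⟩ | ⟨-, ⟨-, hc⟩ | ⟨-, hc⟩⟩ | ⟨-, ⟨-, hc⟩ | ⟨-, hc⟩⟩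
  · exact Or.inr hc
  · exact Or.inl (congrArg Fin.val hc)
  · exact Or.inr (Or.inl hc)
  · exact Or.inr (Or.inr hc)
  · exact Or.inr (Or.inr hc)
  · exact Or.inr (Or.inl hc)

lemma tri_adj_cyclicAdj_of_level_eq (h : (tri m n d).Adj u v) (hl : u.1 = v.1) :
    CyclicAdj m u.2 v.2 := by
  have hl' := congrArg Fin.val hl
  rcases tri_adj_cases h with ⟨-, hc⟩ | ⟨-, h'⟩ | ⟨h', -⟩ | ⟨h', -⟩
  · exact hc
  all_goals omega

lemma tri_diag_eq_true (hm : 3 ≤ m) (h : (tri m n d).Adj u v) (hl : v.1.val = u.1.val + 1)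
    (hc : (u.2.val + 1) % m = v.2) : d u.1 u.2 = true := by
  have hu := u.2.isLt
  have hv := v.2.isLt
  rw [add_one_mod_eq_iff hu] at hc
  rcases tri_adj_cases h with ⟨h', -⟩ | ⟨h', -⟩ | ⟨-, ⟨hd, -⟩ | ⟨-, h'⟩⟩ | ⟨h', -⟩
  · rw [h'] at hl; omega
  · rw [h'] at hc; omega
  · exact hd
  · rw [add_one_mod_eq_iff hv] at h'; omega
  · omega

lemma tri_diag_eq_false (hm : 3 ≤ m) (h : (tri m n d).Adj u v) (hl : v.1.val = u.1.val + 1)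
    (hc : (v.2.val + 1) % m = u.2) : d u.1 v.2 = false := by
  have hu := u.2.isLt
  have hv := v.2.isLt
  rw [add_one_mod_eq_iff hv] at hc
  rcases tri_adj_cases h with ⟨h', -⟩ | ⟨h', -⟩ | ⟨-, ⟨-, h'⟩ | ⟨hd, -⟩⟩ | ⟨h', -⟩
  · rw [h'] at hl; omega
  · rw [h'] at hc; omega
  · rw [add_one_mod_eq_iff hu] at h'; omega
  · exact hd
  · omega

lemma tri_not_two_level_K4 (hm : 4 ≤ m) {p q r s : Fin (n + 1) × Fin m} {a : ℕ}
    (hp : p.1.val = a) (hq : q.1.val = a) (hr : r.1.val = a + 1) (hs : s.1.val = a + 1)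
    (hrs : r ≠ s) (hpq : (tri m n d).Adj p q) (hpr : (tri m n d).Adj p r)
    (hps : (tri m n d).Adj p s) (hqr : (tri m n d).Adj q r) (hqs : (tri m n d).Adj q s) :
    False := by
  wlog hsucc : (p.2.val + 1) % m = q.2 generalizing p q
  · rcases tri_adj_cyclicAdj_of_level_eq hpq (Fin.ext (hp.trans hq.symm)) with h | h
    · exact hsucc h
    · exact this hq hp hpq.symm hqr hqs hpr hps h
  have hcol {w} (hpw : (tri m n d).Adj p w) (hqw : (tri m n d).Adj q w) :
      w.2.val = p.2 ∨ w.2.val = q.2 :=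
    CyclicAdj.eq_or_eq_of_near hm p.2.isLt q.2.isLt w.2.isLt (Or.inl hsucc)
      (tri_adj_col_eq_or_cyclicAdj hpw.symm) (tri_adj_col_eq_or_cyclicAdj hqw.symm)
  have hrs_col : r.2.val ≠ s.2.val := fun h =>
    hrs (Prod.ext (Fin.ext (hr.trans hs.symm)) (Fin.ext h))
  have both_diagonals {r s} (hr : r.1.val = a + 1) (hs : s.1.val = a + 1)
      (hpr : (tri m n d).Adj p r) (hqs : (tri m n d).Adj q s) (hrq : r.2.val = q.2)
      (hsp : s.2.val = p.2) : False := by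
    have h1 := tri_diag_eq_true (by omega) hpr (by omega) (hsucc.trans hrq.symm)
    have h2 := tri_diag_eq_false (by omega) hqs (by omega) (by rw [hsp, hsucc])
    rw [hq, hsp, ← hp, h1] at h2
    exact Bool.noConfusion h2
  rcases hcol hpr hqr with hr' | hr' <;> rcases hcol hps hqs with hs' | hs'
  · exact hrs_col (hr'.trans hs'.symm)
  · exact both_diagonals hs hr hps hqr hs' hr'
  · exact both_diagonals hr hs hpr hqs hr' hs'
  · exact hrs_col (hr'.trans hs'.symm)

lemma tri_card_filter_level_le_two (hm : 4 ≤ m) {s : Finset (Fin (n + 1) × Fin m)}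
    (hs : (tri m n d).IsClique (s : Set (Fin (n + 1) × Fin m))) (a : ℕ) :
    (s.filter (fun u => u.1.val = a)).card ≤ 2 := by
  by_contra! h
  obtain ⟨x, hx, y, hy, z, hz, hxy, hxz, hyz⟩ := Finset.two_lt_card.mp h
  simp only [Finset.mem_filter] at hx hy hz
  have hcol {u v} (hu : u ∈ s ∧ u.1.val = a) (hv : v ∈ s ∧ v.1.val = a) (huv : u ≠ v) :
      CyclicAdj m u.2 v.2 ∧ u.2.val ≠ v.2.val := by
    have hl : u.1 = v.1 := Fin.ext (hu.2.trans hv.2.symm)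
    exact ⟨tri_adj_cyclicAdj_of_level_eq (hs hu.1 hv.1 huv) hl,
      fun h => huv (Prod.ext hl (Fin.ext h))⟩
  rcases CyclicAdj.eq_or_eq_of_near hm x.2.isLt y.2.isLt z.2.isLt (hcol hx hy hxy).1
      (Or.inr (hcol hz hx hxz.symm).1) (Or.inr (hcol hz hy hyz.symm).1) with h | h
  · exact (hcol hx hz hxz).2 h.symm
  · exact (hcol hy hz hyz).2 h.symm

lemma tri_isClique_subset_levels {s : Finset (Fin (n + 1) × Fin m)}
    (hs : (tri m n d).IsClique (s : Set (Fin (n + 1) × Fin m))) (hv : v ∈ s)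
    (hmin : ∀ w ∈ s, v.1.val ≤ w.1.val) :
    s ⊆ s.filter (fun u => u.1.val = v.1.val) ∪ s.filter (fun u => u.1.val = v.1.val + 1) := by
  intro w hw
  have hvw := hmin w hw
  have hwv : w.1.val ≤ v.1.val + 1 := by
    rcases eq_or_ne w v with rfl | hne
    · omega
    · exact tri_adj_level_le (hs hw hv hne)
  simp only [Finset.mem_union, Finset.mem_filter, hw, true_and]
  omega

end Triangulation

theorem tri_gccg_no_K4_general (m n : ℕ) (hm : 4 ≤ m) (d : ℕ → ℕ → Bool) :
    IsEmpty ((⊤ : SimpleGraph (Fin 4)) ↪g tri m n d) := by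
  suffices (tri m n d).CliqueFree 4 from ⟨fun f => f.isContained.not_cliqueFree this⟩
  rintro s ⟨hs, hcard⟩
  obtain ⟨v, hv, hmin⟩ := s.exists_min_image (fun u => u.1.val) (Finset.card_pos.mp (by omega))
  have hsplit := (Finset.card_le_card (tri_isClique_subset_levels hs hv hmin)).trans
    (Finset.card_union_le _ _)
  have hlower_le := tri_card_filter_level_le_two hm hs v.1.val
  have hupper_le := tri_card_filter_level_le_two hm hs (v.1.val + 1)
  obtain ⟨p, q, hpq, hlower⟩ := Finset.card_eq_two.mp (hlower_le.antisymm (by omega))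
  obtain ⟨r, t, hrt, hupper⟩ := Finset.card_eq_two.mp (hupper_le.antisymm (by omega))
  have hp := hlower ▸ Finset.mem_insert_self p {q}
  have hq := hlower ▸ Finset.mem_insert_of_mem (Finset.mem_singleton_self q)
  have hr := hupper ▸ Finset.mem_insert_self r {t}
  have ht := hupper ▸ Finset.mem_insert_of_mem (Finset.mem_singleton_self t)
  simp only [Finset.mem_filter] at hp hq hr ht
  exact tri_not_two_level_K4 hm hp.2 hq.2 hr.2 ht.2 hrt (hs hp.1 hq.1 hpq)
    (hs hp.1 hr.1 (by rintro rfl; omega)) (hs hp.1 ht.1 (by rintro rfl; omega))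
    (hs hq.1 hr.1 (by rintro rfl; omega)) (hs hq.1 ht.1 (by rintro rfl; omega))

/-- For `m ≥ 4` and `n ≥ 1`, no triangulation of the grid-covered cylinder graph `G_{m,n}`
contains the complete graph `K 4` as an induced subgraph. -/
theorem tri_gccg_no_K4 (m n : ℕ) (hm : 4 ≤ m) (hn : 1 ≤ n) (d : ℕ → ℕ → Bool) :
    IsEmpty ((⊤ : SimpleGraph (Fin 4)) ↪g tri m n d) :=
  tri_gccg_no_K4_general m n hm d
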